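/- arXiv:2211.10942 — 2 statements merged into one kernel-verified Lean document; each statement's English description precedes it below -/
import Mathlib

section
/- Let (x^k) be a sequence in E converging to x*, with x^k ≠ x^{k+1} for all k, and let (Ψ_k) be a non-increasing sequence of non-negative real numbers converging to 0 (standing for Ψ_k = f(x^k) − f*). Let θ ∈ (0, 1), and suppose there exist constants D > 0, M > 0, L > 0 and N ∈ ℕ such that for all k ≥ N: Ψ_k − Ψ_{k+1} ≥ D‖x^k − x^{k+1}‖² (sufficient descent) and Ψ_k^θ ≤ M·(1−θ)·L·‖x^{k−1} − x^k‖ (Kurdyka–Łojasiewicz inequality along the sequence with φ(t) = M·t^{1−θ}). Then: (ii) if θ ∈ (0, 1/2] and ‖x^k − x*‖ > 0 for all k, there exist q ∈ (0, 1), c > 0 and N′ such that ‖x^k − x*‖ ≤ c·q^k for all k ≥ N′, i.e., linear convergence; (iii) if θ ∈ (1/2, 1) and ‖x^k − x*‖ > 0 for all k, there exist c > 0 and N′ such that ‖x^k − x*‖ ≤ c·k^{(1−θ)/(1−2θ)} for all k ≥ N′, i.e., sublinear convergence. -/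
open Filter Topology

section helpers

lemma bern_aux {q s t : ℝ} (hq0 : 0 ≤ q) (hq1 : q ≤ 1) (ht : 0 < t) (hts : t ≤ s) :
    q * s ^ (q - 1) * (s - t) ≤ s ^ q - t ^ q := by
  have hs : 0 < s := lt_of_lt_of_le ht hts
  have hsq : (0:ℝ) < s ^ q := Real.rpow_pos_of_pos hs q
  have h1 : (-1 : ℝ) ≤ t / s - 1 := by
    have : 0 ≤ t / s := le_of_lt (div_pos ht hs)
    linarith
  have h : (t / s) ^ q ≤ 1 + q * (t / s - 1) := by
    have h' := rpow_one_add_le_one_add_mul_self h1 hq0 hq1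
    rwa [add_sub_cancel] at h'
  rw [Real.div_rpow ht.le hs.le] at h
  have h2 : t ^ q * s ≤ (s + q * (t - s)) * s ^ q := by
    have h3 := mul_le_mul_of_nonneg_right h (le_of_lt (mul_pos hsq hs))
    have e1 : t ^ q / s ^ q * (s ^ q * s) = t ^ q * s := by
      field_simp
    have e2 : (1 + q * (t / s - 1)) * (s ^ q * s) = (s + q * (t - s)) * s ^ q := by
      field_simp
    rw [e1, e2] at h3
    exact h3
  have hs1 : s ^ (q - 1) = s ^ q / s := by
    rw [Real.rpow_sub hs, Real.rpow_one]
  rw [hs1]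
  have e : q * (s ^ q / s) * (s - t) = q * s ^ q * (s - t) / s := by ring
  rw [e, div_le_iff₀ hs]
  nlinarith [h2]

lemma bern_neg {p s t : ℝ} (hp0 : 0 < p) (hp1 : p ≤ 1) (ht : 0 < t) (hts : t ≤ s) :
    p * s ^ (-p - 1) * (s - t) ≤ t ^ (-p) - s ^ (-p) := by
  have hs : 0 < s := lt_of_lt_of_le ht hts
  have hst : 0 ≤ s - t := sub_nonneg.mpr hts
  have h := bern_aux hp0.le hp1 ht hts
  have htp : (0:ℝ) < t ^ p := Real.rpow_pos_of_pos ht p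
  have hsp : (0:ℝ) < s ^ p := Real.rpow_pos_of_pos hs p
  have htps : t ^ p ≤ s ^ p := Real.rpow_le_rpow ht.le hts hp0.le
  have hsS : (0:ℝ) < s ^ p * s := mul_pos hsp hs
  have h' : p * s ^ p * (s - t) ≤ (s ^ p - t ^ p) * s := by
    have e : s ^ (p - 1) = s ^ p / s := by rw [Real.rpow_sub hs, Real.rpow_one]
    rw [e] at h
    have e4 : p * s ^ p * (s - t) = p * (s ^ p / s) * (s - t) * s := by
      field_simp
    rw [e4]
    exact mul_le_mul_of_nonneg_right h hs.le
  rw [Real.rpow_neg ht.le, Real.rpow_neg hs.le, show -p - 1 = -(p + 1) by ring,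
    Real.rpow_neg hs.le, Real.rpow_add hs, Real.rpow_one]
  have e2 : (t ^ p)⁻¹ - (s ^ p)⁻¹ = (s ^ p - t ^ p) / (s ^ p * t ^ p) := by
    field_simp
  have e3 : p * (s ^ p * s)⁻¹ * (s - t) = p * (s - t) / (s ^ p * s) := by ring
  rw [e2, e3, div_le_div_iff₀ hsS (mul_pos hsp htp)]
  nlinarith [h', htps, mul_nonneg (mul_nonneg hp0.le hst) hsp.le, hsp.le, htp.le, hs.le]

lemma tele {E : Type*} [NormedAddCommGroup E] (x : ℕ → E) :
    ∀ a b, a ≤ b → ‖x a - x b‖ ≤ ∑ k ∈ Finset.Ico a b, ‖x k - x (k + 1)‖ := by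
  intro a b hab
  induction b, hab using Nat.le_induction with
  | base => simp
  | succ b hab ih =>
    have h : ‖x a - x (b + 1)‖ ≤ ‖x a - x b‖ + ‖x b - x (b + 1)‖ := by
      have e : x a - x (b + 1) = (x a - x b) + (x b - x (b + 1)) := by abel
      rw [e]; exact norm_add_le _ _
    rw [Finset.sum_Ico_succ_top hab]
    linarith

lemma le_rpow_half {y z : ℝ} (hy : 0 ≤ y) (h : y ^ 2 ≤ z) : y ≤ z ^ ((1:ℝ)/2) := by
  have e : y = (y ^ (2:ℕ)) ^ ((1:ℝ)/2) := by
    rw [← Real.rpow_natCast y 2, ← Real.rpow_mul hy]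
    norm_num
  rw [e]
  exact Real.rpow_le_rpow (by positivity) h (by norm_num)

end helpers

set_option maxHeartbeats 2000000 in
/-- convergence rate of `‖xᵏ − x*‖` for DCA under the
Kurdyka–Łojasiewicz property with exponent `θ`.
(The two recursive hypotheses are stated with shifted index `k+1` instead of `k−1`.) -/
theorem stmt_17
    {E : Type*} [NormedAddCommGroup E] [InnerProductSpace ℝ E] [FiniteDimensional ℝ E]
    (x : ℕ → E) (xstar : E)
    (hxlim : Tendsto x atTop (𝓝 xstar))
    (hne : ∀ k : ℕ, x k ≠ x (k + 1))
    (Ψ : ℕ → ℝ)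
    (hmono : ∀ k, Ψ (k + 1) ≤ Ψ k) (hnonneg : ∀ k, 0 ≤ Ψ k)
    (hto0 : Tendsto Ψ atTop (𝓝 0))
    (θ : ℝ) (hθ : θ ∈ Set.Ioo (0 : ℝ) 1)
    (D M L : ℝ) (hD : 0 < D) (hM : 0 < M) (hL : 0 < L)
    (N : ℕ)
    (hdesc : ∀ k, N ≤ k → Ψ k - Ψ (k + 1) ≥ D * ‖x k - x (k + 1)‖ ^ 2)
    (hKL : ∀ k, N ≤ k → Ψ (k + 1) ^ θ ≤ M * (1 - θ) * L * ‖x k - x (k + 1)‖) :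
    (θ ≤ 1 / 2 → (∀ k, 0 < ‖x k - xstar‖) →
      ∃ q ∈ Set.Ioo (0 : ℝ) 1, ∃ c > 0, ∃ N' : ℕ,
        ∀ k, N' ≤ k → ‖x k - xstar‖ ≤ c * q ^ k) ∧
    (1 / 2 < θ → (∀ k, 0 < ‖x k - xstar‖) →
      ∃ c > 0, ∃ N' : ℕ,
        ∀ k, N' ≤ k → ‖x k - xstar‖ ≤ c * (k : ℝ) ^ ((1 - θ) / (1 - 2 * θ))) := by
  obtain ⟨hθ0, hθ1⟩ := hθ
  have hθ1' : (0:ℝ) < 1 - θ := by linarith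
  have hdpos : ∀ k, (0:ℝ) < ‖x k - x (k + 1)‖ := by
    intro k
    rw [norm_pos_iff, sub_ne_zero]
    exact hne k
  have hC : 0 < M * (1 - θ) * L := by positivity
  have hanti : Antitone Ψ := antitone_nat_of_succ_le hmono
  have hΨpos : ∀ k, 0 < Ψ k := by
    have key : ∀ j, N ≤ j → 0 < Ψ (j + 1) := by
      intro j hj
      by_contra hcon
      push_neg at hcon
      have h0 : Ψ (j + 1) = 0 := le_antisymm hcon (hnonneg _)
      have h1 : Ψ (j + 2) = 0 := le_antisymm (h0 ▸ hmono (j + 1)) (hnonneg _)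
      have h2 := hdesc (j + 1) (by omega)
      have h3 : 0 < D * ‖x (j + 1) - x (j + 1 + 1)‖ ^ 2 :=
        mul_pos hD (pow_pos (hdpos (j + 1)) 2)
      rw [show j + 1 + 1 = j + 2 from rfl] at h3
      rw [h0, h1] at h2
      simp only [show j + 1 + 1 = j + 2 from rfl] at h2
      linarith
    intro k
    calc (0:ℝ) < Ψ (max k N + 1) := key _ (le_max_right _ _)
      _ ≤ Ψ k := hanti (le_trans (le_max_left k N) (Nat.le_succ _))
  have hφmono : ∀ k, M * Ψ (k + 1) ^ (1 - θ) ≤ M * Ψ k ^ (1 - θ) := fun k =>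
    mul_le_mul_of_nonneg_left
      (Real.rpow_le_rpow (hnonneg _) (hmono k) hθ1'.le) hM.le
  have hφpos : ∀ k, 0 < M * Ψ k ^ (1 - θ) := fun k =>
    mul_pos hM (Real.rpow_pos_of_pos (hΨpos k) _)
  -- key recursion on Ψ: D * (Ψ (k+1) ^ θ)^2 ≤ C^2 * (Ψ k - Ψ (k+1))
  have hrecΨ : ∀ k, N ≤ k →
      D * (Ψ (k + 1) ^ θ) ^ 2 ≤ (M * (1 - θ) * L) ^ 2 * (Ψ k - Ψ (k + 1)) := by
    intro k hk
    have h1 : (Ψ (k + 1) ^ θ) ^ 2 ≤ (M * (1 - θ) * L * ‖x k - x (k + 1)‖) ^ 2 :=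
      pow_le_pow_left₀ (Real.rpow_nonneg (hnonneg _) θ) (hKL k hk) 2
    nlinarith [mul_le_mul_of_nonneg_left h1 hD.le,
      mul_le_mul_of_nonneg_left (hdesc k hk).le (sq_nonneg (M * (1 - θ) * L)),
      sq_nonneg (‖x k - x (k + 1)‖), hD.le]
  -- one-step inequality
  have hstep : ∀ k, N ≤ k →
      2 * D * ‖x (k + 1) - x (k + 2)‖ ≤
        D * ‖x k - x (k + 1)‖ +
          L * (M * Ψ (k + 1) ^ (1 - θ) - M * Ψ (k + 2) ^ (1 - θ)) := by
    intro k hk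
    have hts : Ψ (k + 2) ≤ Ψ (k + 1) := hmono (k + 1)
    have hconc := bern_aux (q := 1 - θ) hθ1'.le (by linarith) (hΨpos (k + 2)) hts
    rw [show (1 - θ) - 1 = -θ by ring] at hconc
    have hKL' := hKL k hk
    have hdesc1 := (hdesc (k + 1) (by omega)).le
    rw [show k + 1 + 1 = k + 2 from rfl] at hdesc1
    have hθn : (0:ℝ) < Ψ (k + 1) ^ (-θ) := Real.rpow_pos_of_pos (hΨpos _) _
    have hmul1 : Ψ (k + 1) ^ (-θ) * Ψ (k + 1) ^ θ = 1 := by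
      rw [← Real.rpow_add (hΨpos _), neg_add_cancel, Real.rpow_zero]
    -- h1 : 1 ≤ C * d k * Ψ(k+1)^(-θ)
    have h1 : 1 ≤ M * (1 - θ) * L * ‖x k - x (k + 1)‖ * Ψ (k + 1) ^ (-θ) := by
      have h := mul_le_mul_of_nonneg_left hKL' hθn.le
      rw [hmul1] at h
      linarith [h]
    -- h2 : M*(1-θ)*Ψ(k+1)^(-θ)*(D*d(k+1)^2) ≤ Δφ
    have h2 : M * (1 - θ) * Ψ (k + 1) ^ (-θ) * (D * ‖x (k + 1) - x (k + 2)‖ ^ 2) ≤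
        M * Ψ (k + 1) ^ (1 - θ) - M * Ψ (k + 2) ^ (1 - θ) := by
      have ha := mul_le_mul_of_nonneg_left hdesc1
        (by positivity : (0:ℝ) ≤ M * (1 - θ) * Ψ (k + 1) ^ (-θ))
      have hb := mul_le_mul_of_nonneg_left hconc hM.le
      nlinarith [ha, hb]
    -- G : D * d(k+1)^2 ≤ L * d k * Δφ
    have G : D * ‖x (k + 1) - x (k + 2)‖ ^ 2 ≤
        L * ‖x k - x (k + 1)‖ *
          (M * Ψ (k + 1) ^ (1 - θ) - M * Ψ (k + 2) ^ (1 - θ)) := by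
      nlinarith [mul_le_mul_of_nonneg_right h1
          (by positivity : (0:ℝ) ≤ D * ‖x (k + 1) - x (k + 2)‖ ^ 2),
        mul_le_mul_of_nonneg_left h2
          (by positivity : (0:ℝ) ≤ L * ‖x k - x (k + 1)‖)]
    have hΔ : 0 ≤ M * Ψ (k + 1) ^ (1 - θ) - M * Ψ (k + 2) ^ (1 - θ) :=
      sub_nonneg.mpr (hφmono (k + 1))
    -- AM-GM finish
    nlinarith [G, sq_nonneg (D * ‖x k - x (k + 1)‖ -
        L * (M * Ψ (k + 1) ^ (1 - θ) - M * Ψ (k + 2) ^ (1 - θ))),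
      sq_nonneg (2 * D * ‖x (k + 1) - x (k + 2)‖ - (D * ‖x k - x (k + 1)‖ +
        L * (M * Ψ (k + 1) ^ (1 - θ) - M * Ψ (k + 2) ^ (1 - θ)))),
      mul_pos hD (hdpos (k + 1)), hD.le, (hdpos k).le, hΔ, hL.le,
      mul_nonneg hL.le hΔ, mul_nonneg hD.le (hdpos k).le]
  -- summed inequality
  have hsum : ∀ n, N ≤ n → ∀ m, n ≤ m →
      2 * D * (∑ k ∈ Finset.Ico (n + 1) (m + 2), ‖x k - x (k + 1)‖) +
          L * (M * Ψ (m + 2) ^ (1 - θ)) ≤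
        D * (∑ k ∈ Finset.Ico n (m + 1), ‖x k - x (k + 1)‖) +
          L * (M * Ψ (n + 1) ^ (1 - θ)) := by
    intro n hn m hm
    induction m, hm using Nat.le_induction with
    | base =>
      rw [Finset.sum_Ico_succ_top (le_refl (n + 1)), Finset.Ico_self,
        Finset.sum_empty, Finset.sum_Ico_succ_top (le_refl n), Finset.Ico_self,
        Finset.sum_empty]
      have h := hstep n hn
      simp only [show n + 1 + 1 = n + 2 from rfl] at h ⊢
      linarith
    | succ m hm ih =>
      have hs2 := hstep (m + 1) (by omega)
      rw [show m + 1 + 1 = m + 2 from rfl, show m + 1 + 2 = m + 3 from rfl] at hs2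
      rw [Finset.sum_Ico_succ_top (by omega : n + 1 ≤ m + 2),
        Finset.sum_Ico_succ_top (by omega : n ≤ m + 1)]
      simp only [show m + 1 + 2 = m + 3 from rfl, show m + 1 + 1 = m + 2 from rfl] at *
      linarith [ih]
  -- uniform bound on partial sums
  have hbnd : ∀ n, N ≤ n → ∀ m,
      D * (∑ k ∈ Finset.Ico (n + 1) m, ‖x k - x (k + 1)‖) ≤
        D * ‖x n - x (n + 1)‖ + L * (M * Ψ (n + 1) ^ (1 - θ)) := by
    intro n hn m
    rcases le_or_gt m (n + 1) with hm | hm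
    · rw [Finset.Ico_eq_empty (by omega), Finset.sum_empty, mul_zero]
      nlinarith [mul_pos hD (hdpos n), mul_pos hL (hφpos (n + 1))]
    · obtain ⟨m', rfl⟩ : ∃ m', m = m' + 2 := ⟨m - 2, by omega⟩
      have hq := hsum n hn m' (by omega)
      have hsplit : ∑ k ∈ Finset.Ico n (m' + 1), ‖x k - x (k + 1)‖ =
          ‖x n - x (n + 1)‖ + ∑ k ∈ Finset.Ico (n + 1) (m' + 1), ‖x k - x (k + 1)‖ := by
        rw [Finset.sum_eq_sum_Ico_succ_bot (by omega : n < m' + 1)]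
      have hsub : ∑ k ∈ Finset.Ico (n + 1) (m' + 1), ‖x k - x (k + 1)‖ ≤
          ∑ k ∈ Finset.Ico (n + 1) (m' + 2), ‖x k - x (k + 1)‖ :=
        Finset.sum_le_sum_of_subset_of_nonneg
          (Finset.Ico_subset_Ico_right (by omega)) (fun i _ _ => norm_nonneg _)
      have hφ2 := (hφpos (m' + 2)).le
      nlinarith [hq, mul_le_mul_of_nonneg_left hsub hD.le, hL.le]
  -- master bound
  have hmaster : ∀ n, N ≤ n →
      D * ‖x (n + 1) - xstar‖ ≤
        D * ‖x n - x (n + 1)‖ + L * (M * Ψ (n + 1) ^ (1 - θ)) := by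
    intro n hn
    have hlim2 : Tendsto (fun m => D * ‖x (n + 1) - x m‖) atTop
        (𝓝 (D * ‖x (n + 1) - xstar‖)) :=
      ((tendsto_const_nhds.sub hxlim).norm.const_mul D)
    refine le_of_tendsto hlim2 (eventually_atTop.2 ⟨n + 1, fun m hm => ?_⟩)
    calc D * ‖x (n + 1) - x m‖
        ≤ D * (∑ k ∈ Finset.Ico (n + 1) m, ‖x k - x (k + 1)‖) :=
          mul_le_mul_of_nonneg_left (tele x (n + 1) m hm) hD.le
      _ ≤ _ := hbnd n hn m
  constructor
  · -- case θ ≤ 1/2 : linear rate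
    intro hθhalf _
    obtain ⟨N1, hN1N, hΨN1⟩ : ∃ N1, N ≤ N1 ∧ Ψ N1 < 1 := by
      have hev : ∀ᶠ k in atTop, Ψ k < 1 := hto0.eventually_lt_const one_pos
      obtain ⟨N1, h⟩ := ((eventually_ge_atTop N).and hev).exists
      exact ⟨N1, h.1, h.2⟩
    have hΨle1 : ∀ k, N1 ≤ k → Ψ k ≤ 1 := fun k hk => le_trans (hanti hk) hΨN1.le
    have hC2 : 0 < (M * (1 - θ) * L) ^ 2 := by positivity
    set a := D / (M * (1 - θ) * L) ^ 2 with hadef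
    have ha : 0 < a := div_pos hD hC2
    have hgeo : ∀ k, N1 ≤ k → (1 + a) * Ψ (k + 1) ≤ Ψ k := by
      intro k hk
      have h1 : Ψ (k + 1) ≤ (Ψ (k + 1) ^ θ) ^ 2 := by
        have e : (Ψ (k + 1) ^ θ) ^ (2:ℕ) = Ψ (k + 1) ^ (θ * 2) := by
          rw [← Real.rpow_natCast (Ψ (k + 1) ^ θ) 2, ← Real.rpow_mul (hnonneg _)]
          norm_num
        rw [e]
        have h2 := Real.rpow_le_rpow_of_exponent_ge (hΨpos (k + 1))
          (hΨle1 (k + 1) (by omega)) (by linarith : θ * 2 ≤ 1)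
        rwa [Real.rpow_one] at h2
      have h3 := hrecΨ k (le_trans hN1N hk)
      have h4 : D * Ψ (k + 1) ≤ (M * (1 - θ) * L) ^ 2 * (Ψ k - Ψ (k + 1)) :=
        le_trans (mul_le_mul_of_nonneg_left h1 hD.le) h3
      have h5 : a * Ψ (k + 1) ≤ Ψ k - Ψ (k + 1) := by
        rw [hadef, div_mul_eq_mul_div, div_le_iff₀ hC2]
        nlinarith [h4]
      linarith
    set r := 1 / (1 + a) with hrdef
    have hr0 : 0 < r := by rw [hrdef]; positivity
    have hr1 : r < 1 := by rw [hrdef, div_lt_one (by linarith)]; linarith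
    have hdecay : ∀ k, N1 ≤ k → Ψ k ≤ Ψ N1 * r ^ (k - N1) := by
      intro k hk
      induction k, hk using Nat.le_induction with
      | base => rw [Nat.sub_self, pow_zero, mul_one]
      | succ k hk ih =>
        have h6 : Ψ (k + 1) ≤ r * Ψ k := by
          rw [hrdef, div_mul_eq_mul_div, one_mul, le_div_iff₀ (by linarith : (0:ℝ) < 1 + a)]
          nlinarith [hgeo k hk]
        calc Ψ (k + 1) ≤ r * Ψ k := h6
          _ ≤ r * (Ψ N1 * r ^ (k - N1)) := mul_le_mul_of_nonneg_left ih hr0.le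
          _ = Ψ N1 * r ^ (k + 1 - N1) := by
              rw [show k + 1 - N1 = (k - N1) + 1 by omega, pow_succ]
              ring
    set q := r ^ ((1:ℝ)/2) with hqdef
    have hq0 : 0 < q := Real.rpow_pos_of_pos hr0 _
    have hq1 : q < 1 := Real.rpow_lt_one hr0.le hr1 (by norm_num)
    have hqm : ∀ m : ℕ, (r ^ m) ^ ((1:ℝ)/2) = q ^ m := by
      intro m
      rw [hqdef, ← Real.rpow_natCast r m, ← Real.rpow_mul hr0.le,
        ← Real.rpow_natCast (r ^ ((1:ℝ)/2)) m, ← Real.rpow_mul hr0.le]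
      ring_nf
    set A := (D / D ^ ((1:ℝ)/2) + L * M) * Ψ N1 ^ ((1:ℝ)/2) with hAdef
    have hA : 0 < A := by
      have h1 := Real.rpow_pos_of_pos (hΨpos N1) ((1:ℝ)/2)
      have h2 := Real.rpow_pos_of_pos hD ((1:ℝ)/2)
      have h3 : 0 < D / D ^ ((1:ℝ)/2) := div_pos hD h2
      nlinarith [mul_pos hL hM]
    have hkey : ∀ n, N1 ≤ n → D * ‖x (n + 1) - xstar‖ ≤ A * q ^ (n - N1) := by
      intro n hn
      have h10 : Ψ n ^ ((1:ℝ)/2) ≤ Ψ N1 ^ ((1:ℝ)/2) * q ^ (n - N1) := by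
        calc Ψ n ^ ((1:ℝ)/2) ≤ (Ψ N1 * r ^ (n - N1)) ^ ((1:ℝ)/2) :=
            Real.rpow_le_rpow (hnonneg n) (hdecay n hn) (by norm_num)
          _ = Ψ N1 ^ ((1:ℝ)/2) * (r ^ (n - N1)) ^ ((1:ℝ)/2) :=
            Real.mul_rpow (hnonneg N1) (pow_nonneg hr0.le _)
          _ = _ := by rw [hqm]
      have hdn : ‖x n - x (n + 1)‖ ≤ Ψ N1 ^ ((1:ℝ)/2) * q ^ (n - N1) / D ^ ((1:ℝ)/2) := by
        have h7 : ‖x n - x (n + 1)‖ ^ 2 ≤ Ψ n / D := by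
          have h := (hdesc n (le_trans hN1N hn)).le
          rw [le_div_iff₀ hD]
          nlinarith [hnonneg (n + 1)]
        have h8 := le_rpow_half (norm_nonneg _) h7
        have h9 : (Ψ n / D) ^ ((1:ℝ)/2) = Ψ n ^ ((1:ℝ)/2) / D ^ ((1:ℝ)/2) :=
          Real.div_rpow (hnonneg n) hD.le _
        have h2 := Real.rpow_pos_of_pos hD ((1:ℝ)/2)
        calc ‖x n - x (n + 1)‖ ≤ (Ψ n / D) ^ ((1:ℝ)/2) := h8
          _ = Ψ n ^ ((1:ℝ)/2) / D ^ ((1:ℝ)/2) := h9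
          _ ≤ Ψ N1 ^ ((1:ℝ)/2) * q ^ (n - N1) / D ^ ((1:ℝ)/2) := by gcongr
      have hφn : M * Ψ (n + 1) ^ (1 - θ) ≤ M * (Ψ N1 ^ ((1:ℝ)/2) * q ^ (n - N1)) := by
        have h11 : Ψ (n + 1) ^ (1 - θ) ≤ Ψ (n + 1) ^ ((1:ℝ)/2) :=
          Real.rpow_le_rpow_of_exponent_ge (hΨpos (n + 1))
            (hΨle1 (n + 1) (by omega)) (by linarith)
        have h12 : Ψ (n + 1) ^ ((1:ℝ)/2) ≤ Ψ n ^ ((1:ℝ)/2) :=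
          Real.rpow_le_rpow (hnonneg _) (hmono n) (by norm_num)
        have := le_trans (le_trans h11 h12) h10
        exact mul_le_mul_of_nonneg_left this hM.le
      calc D * ‖x (n + 1) - xstar‖
          ≤ D * ‖x n - x (n + 1)‖ + L * (M * Ψ (n + 1) ^ (1 - θ)) :=
            hmaster n (le_trans hN1N hn)
        _ ≤ D * (Ψ N1 ^ ((1:ℝ)/2) * q ^ (n - N1) / D ^ ((1:ℝ)/2)) +
            L * (M * (Ψ N1 ^ ((1:ℝ)/2) * q ^ (n - N1))) := by
            have := mul_le_mul_of_nonneg_left hdn hD.le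
            have := mul_le_mul_of_nonneg_left hφn hL.le
            linarith
        _ = A * q ^ (n - N1) := by rw [hAdef]; ring
    refine ⟨q, ⟨hq0, hq1⟩, A / D / q ^ (N1 + 1), by positivity, N1 + 1, ?_⟩
    intro k hk
    obtain ⟨n, rfl⟩ : ∃ n, k = n + 1 := ⟨k - 1, by omega⟩
    have hn : N1 ≤ n := by omega
    have h := hkey n hn
    have h2 : ‖x (n + 1) - xstar‖ ≤ A * q ^ (n - N1) / D := by
      rw [le_div_iff₀ hD, mul_comm]
      exact h
    refine le_trans h2 ?_
    have e : q ^ (n - N1) = q ^ (n + 1) / q ^ (N1 + 1) := by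
      rw [eq_div_iff (pow_ne_zero _ hq0.ne'), ← pow_add]
      congr 1
      omega
    rw [e]
    apply le_of_eq
    ring
  · -- case θ > 1/2 : sublinear rate
    intro hθhalf _
    have hp0 : (0:ℝ) < 2 * θ - 1 := by linarith
    set p := 2 * θ - 1 with hpdef
    have hp1 : p ≤ 1 := by rw [hpdef]; linarith
    have hC2 : 0 < (M * (1 - θ) * L) ^ 2 := by positivity
    set a := D / (M * (1 - θ) * L) ^ 2 with hadef
    have ha : 0 < a := div_pos hD hC2
    have h2t : (0:ℝ) < (2:ℝ) ^ (2 * θ) := Real.rpow_pos_of_pos two_pos _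
    have huN : 0 < Ψ N ^ (-p) := Real.rpow_pos_of_pos (hΨpos N) _
    have h2p1 : (1:ℝ) < 2 ^ p := by
      have h := Real.rpow_lt_rpow_of_exponent_lt (by norm_num : (1:ℝ) < 2) hp0
      rwa [Real.rpow_zero] at h
    set c0 := min (p * a / 2 ^ (2 * θ)) ((2 ^ p - 1) * Ψ N ^ (-p)) with hc0def
    have hc0 : 0 < c0 := lt_min (by positivity) (mul_pos (by linarith) huN)
    have hrec2 : ∀ k, N ≤ k → a * Ψ (k + 1) ^ (2 * θ) ≤ Ψ k - Ψ (k + 1) := by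
      intro k hk
      have h3 := hrecΨ k hk
      have e : (Ψ (k + 1) ^ θ) ^ (2:ℕ) = Ψ (k + 1) ^ (2 * θ) := by
        rw [← Real.rpow_natCast (Ψ (k + 1) ^ θ) 2, ← Real.rpow_mul (hnonneg _),
          mul_comm θ]
        norm_num
      rw [e] at h3
      rw [hadef, div_mul_eq_mul_div, div_le_iff₀ hC2]
      nlinarith [h3]
    have hustep : ∀ k, N ≤ k → Ψ k ^ (-p) + c0 ≤ Ψ (k + 1) ^ (-p) := by
      intro k hk
      rcases le_or_gt (Ψ k / 2) (Ψ (k + 1)) with hcase | hcase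
      · have hb := bern_neg hp0 hp1 (hΨpos (k + 1)) (hmono k)
        have hx : 0 < Ψ k ^ (2 * θ) := Real.rpow_pos_of_pos (hΨpos k) _
        have e5 : Ψ k ^ (-p - 1) = (Ψ k ^ (2 * θ))⁻¹ := by
          rw [show -p - 1 = -(2 * θ) by rw [hpdef]; ring, Real.rpow_neg (hnonneg k)]
        have i2 : Ψ k ^ (2 * θ) / 2 ^ (2 * θ) ≤ Ψ (k + 1) ^ (2 * θ) := by
          calc Ψ k ^ (2 * θ) / 2 ^ (2 * θ) = (Ψ k / 2) ^ (2 * θ) :=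
              (Real.div_rpow (hnonneg k) (by norm_num) _).symm
            _ ≤ Ψ (k + 1) ^ (2 * θ) :=
              Real.rpow_le_rpow (by linarith [hnonneg k]) hcase (by linarith)
        have i1 := hrec2 k hk
        have i3 : p * a / 2 ^ (2 * θ) ≤ p * Ψ k ^ (-p - 1) * (Ψ k - Ψ (k + 1)) := by
          rw [e5]
          have i4 : a * (Ψ k ^ (2 * θ) / 2 ^ (2 * θ)) ≤ Ψ k - Ψ (k + 1) :=
            le_trans (mul_le_mul_of_nonneg_left i2 ha.le) i1
          have i5 := mul_le_mul_of_nonneg_left i4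
            (mul_pos hp0 (inv_pos.mpr hx)).le
          have e6 : p * (Ψ k ^ (2 * θ))⁻¹ * (a * (Ψ k ^ (2 * θ) / 2 ^ (2 * θ))) =
              p * a / 2 ^ (2 * θ) := by
            field_simp
          rw [e6] at i5
          linarith [i5]
        have hc0le : c0 ≤ p * a / 2 ^ (2 * θ) := min_le_left _ _
        linarith [le_trans i3 hb]
      · have j1 : (Ψ k / 2) ^ (-p) ≤ Ψ (k + 1) ^ (-p) :=
          Real.rpow_le_rpow_of_nonpos (hΨpos (k + 1)) hcase.le (by linarith)
        have j2 : (Ψ k / 2) ^ (-p) = Ψ k ^ (-p) * 2 ^ p := by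
          rw [Real.div_rpow (hnonneg k) (by norm_num : (0:ℝ) ≤ 2),
            Real.rpow_neg (by norm_num : (0:ℝ) ≤ 2) p, div_eq_mul_inv, inv_inv]
        have j3 : Ψ N ^ (-p) ≤ Ψ k ^ (-p) :=
          Real.rpow_le_rpow_of_nonpos (hΨpos k) (hanti hk) (by linarith)
        have hc0le : c0 ≤ (2 ^ p - 1) * Ψ N ^ (-p) := min_le_right _ _
        nlinarith [j2 ▸ j1, mul_le_mul_of_nonneg_left j3 (by linarith : (0:ℝ) ≤ 2 ^ p - 1), hc0le]
    have hulin : ∀ j : ℕ, c0 * j ≤ Ψ (N + j) ^ (-p) := by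
      intro j
      induction j with
      | zero => simpa using (Real.rpow_pos_of_pos (hΨpos N) (-p)).le
      | succ j ih =>
        have h := hustep (N + j) (by omega)
        push_cast
        push_cast at ih
        have e : N + (j + 1) = (N + j) + 1 := by omega
        rw [e]
        linarith
    have hΨbd : ∀ j : ℕ, 0 < c0 * (j:ℝ) → Ψ (N + j) ≤ (c0 * j) ^ (-(1:ℝ)/p) := by
      intro j hj
      have e7 : Ψ (N + j) = (Ψ (N + j) ^ (-p)) ^ (-(1:ℝ)/p) := by
        rw [← Real.rpow_mul (hnonneg (N + j)),
          show -p * (-(1:ℝ)/p) = 1 by field_simp, Real.rpow_one]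
      rw [e7]
      exact Real.rpow_le_rpow_of_nonpos hj (hulin j)
        (by rw [neg_div]; linarith [div_pos one_pos hp0])
    have he : (1 - θ) / (1 - 2 * θ) = -((1 - θ)/p) := by
      rw [show (1:ℝ) - 2 * θ = -p by rw [hpdef]; ring, div_neg]
    obtain ⟨Nc, hNc⟩ := exists_nat_ge (1 / c0)
    have h1c : 1 ≤ c0 * Nc := by
      rw [div_le_iff₀ hc0] at hNc
      linarith
    have hDh : (0:ℝ) < D ^ ((1:ℝ)/2) := Real.rpow_pos_of_pos hD _
    have hc02 : (0:ℝ) < (c0 / 2) ^ (-((1 - θ)/p)) := Real.rpow_pos_of_pos (by linarith) _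
    have hBpos : (0:ℝ) < D / D ^ ((1:ℝ)/2) + L * M := by
      have := div_pos hD hDh
      nlinarith [mul_pos hL hM]
    refine ⟨(D / D ^ ((1:ℝ)/2) + L * M) * (c0 / 2) ^ (-((1 - θ)/p)) / D,
      div_pos (mul_pos hBpos hc02) hD,
      N + (N + 1 + Nc) + 1, ?_⟩
    intro k hk
    rw [he]
    obtain ⟨j, rfl⟩ : ∃ j, k = N + j + 1 := ⟨k - N - 1, by omega⟩
    have hjN : N + 1 ≤ j := by omega
    have hjNc : Nc ≤ j := by omega
    have hj_c : 1 ≤ c0 * j := by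
      have hcast : (Nc:ℝ) ≤ j := Nat.cast_le.mpr hjNc
      nlinarith [hc0]
    have hjpos : (0:ℝ) < c0 * j := by linarith
    have hjpos1 : (0:ℝ) < c0 * ((j + 1 : ℕ):ℝ) := by
      push_cast
      have h0j : (0:ℝ) ≤ (j:ℝ) := Nat.cast_nonneg j
      nlinarith [hc0]
    -- bound on Ψ (n+1) term
    have hφbd : Ψ (N + j + 1) ^ (1 - θ) ≤ (c0 * j) ^ (-((1 - θ)/p)) := by
      have hb1 : Ψ (N + (j + 1)) ≤ (c0 * ((j:ℝ) + 1)) ^ (-(1:ℝ)/p) := by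
        have := hΨbd (j + 1) hjpos1
        push_cast at this ⊢
        exact this
      rw [show N + j + 1 = N + (j + 1) by omega]
      calc Ψ (N + (j + 1)) ^ (1 - θ)
          ≤ ((c0 * ((j:ℝ) + 1)) ^ (-(1:ℝ)/p)) ^ (1 - θ) :=
            Real.rpow_le_rpow (hnonneg _) hb1 (by linarith)
        _ = (c0 * ((j:ℝ) + 1)) ^ (-(1:ℝ)/p * (1 - θ)) := by
            rw [← Real.rpow_mul (by positivity : (0:ℝ) ≤ c0 * ((j:ℝ) + 1))]
        _ = (c0 * ((j:ℝ) + 1)) ^ (-((1 - θ)/p)) := by ring_nf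
        _ ≤ (c0 * j) ^ (-((1 - θ)/p)) := by
            apply Real.rpow_le_rpow_of_nonpos hjpos
              (by nlinarith [hc0] : c0 * (j:ℝ) ≤ c0 * ((j:ℝ) + 1))
            rw [neg_nonpos]
            exact le_of_lt (div_pos hθ1' hp0)
    -- bound on d n term
    have hdn : ‖x (N + j) - x (N + j + 1)‖ ≤ (c0 * j) ^ (-((1 - θ)/p)) / D ^ ((1:ℝ)/2) := by
      have h7 : ‖x (N + j) - x (N + j + 1)‖ ^ 2 ≤ Ψ (N + j) / D := by
        have h := (hdesc (N + j) (by omega)).le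
        rw [le_div_iff₀ hD]
        nlinarith [hnonneg (N + j + 1)]
      have h8 := le_rpow_half (norm_nonneg _) h7
      have h9 : (Ψ (N + j) / D) ^ ((1:ℝ)/2) = Ψ (N + j) ^ ((1:ℝ)/2) / D ^ ((1:ℝ)/2) :=
        Real.div_rpow (hnonneg _) hD.le _
      have h10 : Ψ (N + j) ^ ((1:ℝ)/2) ≤ (c0 * j) ^ (-((1 - θ)/p)) := by
        calc Ψ (N + j) ^ ((1:ℝ)/2)
            ≤ ((c0 * (j:ℝ)) ^ (-(1:ℝ)/p)) ^ ((1:ℝ)/2) :=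
              Real.rpow_le_rpow (hnonneg _) (hΨbd j hjpos) (by norm_num)
          _ = (c0 * (j:ℝ)) ^ (-(1:ℝ)/p * (1/2)) := by
              rw [← Real.rpow_mul hjpos.le]
          _ ≤ (c0 * j) ^ (-((1 - θ)/p)) := by
              apply Real.rpow_le_rpow_of_exponent_le hj_c
              have hhalf : (1 - θ)/p ≤ (1/2)/p :=
                (div_le_div_iff_of_pos_right hp0).mpr (by linarith)
              have e8 : -(1:ℝ)/p * (1/2) = -((1/2)/p) := by ring
              rw [e8]
              linarith
      calc ‖x (N + j) - x (N + j + 1)‖ ≤ (Ψ (N + j) / D) ^ ((1:ℝ)/2) := h8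
        _ = Ψ (N + j) ^ ((1:ℝ)/2) / D ^ ((1:ℝ)/2) := h9
        _ ≤ (c0 * j) ^ (-((1 - θ)/p)) / D ^ ((1:ℝ)/2) := by gcongr
    -- assemble via master bound
    have hmas := hmaster (N + j) (by omega)
    have hcomb : D * ‖x (N + j + 1) - xstar‖ ≤
        (D / D ^ ((1:ℝ)/2) + L * M) * (c0 * j) ^ (-((1 - θ)/p)) := by
      have t1 := mul_le_mul_of_nonneg_left hdn hD.le
      have t2 : L * (M * Ψ (N + j + 1) ^ (1 - θ)) ≤
          L * M * (c0 * j) ^ (-((1 - θ)/p)) := by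
        have := mul_le_mul_of_nonneg_left hφbd (by positivity : (0:ℝ) ≤ L * M)
        linarith [this]
      have e9 : D * ((c0 * j) ^ (-((1 - θ)/p)) / D ^ ((1:ℝ)/2)) =
          D / D ^ ((1:ℝ)/2) * (c0 * j) ^ (-((1 - θ)/p)) := by ring
      rw [e9] at t1
      nlinarith [hmas, t1, t2]
    -- compare (c0*j) with (c0/2)*(N+j+1)
    have hbase : c0 / 2 * ((N:ℝ) + j + 1) ≤ c0 * j := by
      have hcast : (N:ℝ) + j + 1 ≤ 2 * j := by
        have hn2 : N + j + 1 ≤ 2 * j := by omega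
        exact_mod_cast hn2
      nlinarith [hc0]
    have hbpos : (0:ℝ) < c0 / 2 * ((N:ℝ) + j + 1) := by
      have : (0:ℝ) < (N:ℝ) + j + 1 := by positivity
      positivity
    have hfin : (c0 * j) ^ (-((1 - θ)/p)) ≤
        (c0 / 2) ^ (-((1 - θ)/p)) * ((N:ℝ) + j + 1) ^ (-((1 - θ)/p)) := by
      calc (c0 * (j:ℝ)) ^ (-((1 - θ)/p))
          ≤ (c0 / 2 * ((N:ℝ) + j + 1)) ^ (-((1 - θ)/p)) := by
            apply Real.rpow_le_rpow_of_nonpos hbpos hbase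
            rw [neg_nonpos]
            exact le_of_lt (div_pos hθ1' hp0)
        _ = _ := Real.mul_rpow (by linarith : (0:ℝ) ≤ c0 / 2) (by positivity)
    have hfinal : D * ‖x (N + j + 1) - xstar‖ ≤
        (D / D ^ ((1:ℝ)/2) + L * M) * ((c0 / 2) ^ (-((1 - θ)/p)) *
          ((N:ℝ) + j + 1) ^ (-((1 - θ)/p))) :=
      le_trans hcomb (mul_le_mul_of_nonneg_left hfin hBpos.le)
    have hcast2 : ((N + j + 1 : ℕ) : ℝ) = (N:ℝ) + j + 1 := by push_cast; ring
    have hdiv : ‖x (N + j + 1) - xstar‖ ≤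
        (D / D ^ ((1:ℝ)/2) + L * M) * ((c0 / 2) ^ (-((1 - θ)/p)) *
          ((N:ℝ) + j + 1) ^ (-((1 - θ)/p))) / D := by
      rw [le_div_iff₀ hD, mul_comm]
      exact hfinal
    rw [hcast2]
    exact le_trans hdiv (le_of_eq (by ring))
end

section
/- For every t > 0, the function x ↦ x²/2 − √x + x/√t attains a unique minimizer over [0, ∞), and this minimizer is strictly positive; denote it G(t). For any initial point x_0 > 0, the sequence defined by x_{k+1} = G(x_k) (which is the DCA iteration for minimizing x²/2 + √x over [0, ∞) with the DC decomposition g(x) = x²/2 − √x, h(x) = −2√x) satisfies: x_k > 0 for all k, (x_k) is decreasing (x_{k+1} ≤ x_k for all k), and x_k → 0 as k → ∞, where 0 is the minimizer of x²/2 + √x on [0, ∞). -/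
open Filter Topology

-- strict convexity of the subproblem objective
lemma phi_strictConvex (t : ℝ) : StrictConvexOn ℝ (Set.Ici 0)
    (fun z : ℝ => z ^ 2 / 2 - Real.sqrt z + z / Real.sqrt t) := by
  have h1 : StrictConvexOn ℝ (Set.Ici (0:ℝ)) (fun z : ℝ => -Real.sqrt z) :=
    Real.strictConcaveOn_sqrt.neg
  have h2 : ConvexOn ℝ (Set.Ici (0:ℝ)) (fun z : ℝ => z ^ 2 / 2 + z / Real.sqrt t) := by
    have := (Even.convexOn_pow (even_two) : ConvexOn ℝ Set.univ fun z : ℝ => z ^ 2)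
    have hsq : ConvexOn ℝ (Set.Ici (0:ℝ)) (fun z : ℝ => z ^ 2) := this.subset (Set.subset_univ _) (convex_Ici 0)
    have hlin : ConvexOn ℝ (Set.Ici (0:ℝ)) (fun z : ℝ => z / Real.sqrt t) := by
      have : ConvexOn ℝ (Set.Ici (0:ℝ)) (fun z : ℝ => (Real.sqrt t)⁻¹ • z) :=
        (convexOn_id (convex_Ici 0)).smul (by positivity)
      simpa [div_eq_inv_mul, smul_eq_mul] using this
    have := (hsq.smul (by norm_num : (0:ℝ) ≤ 1/2)).add hlin
    convert this using 2 with z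
    · rfl
    · rfl
    ring_nf
    simp [smul_eq_mul]
    ring
  have h3 := h1.add_convexOn h2
  convert h3 using 2 with z
  · rfl
  show _ = -Real.sqrt z + (z ^ 2 / 2 + z / Real.sqrt t)
  ring

lemma phi_exists_min (t : ℝ) (ht : 0 < t) : ∃ m : ℝ, m ∈ Set.Ici (0:ℝ) ∧
    IsMinOn (fun z : ℝ => z ^ 2 / 2 - Real.sqrt z + z / Real.sqrt t) (Set.Ici 0) m := by
  set φ : ℝ → ℝ := fun z => z ^ 2 / 2 - Real.sqrt z + z / Real.sqrt t with hφ
  have hcont : Continuous φ := by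
    apply Continuous.add
    · exact (continuous_pow 2).div_const 2 |>.sub Real.continuous_sqrt
    · exact continuous_id.div_const _
  obtain ⟨m, hm2, hmin⟩ := (isCompact_Icc : IsCompact (Set.Icc (0:ℝ) 2)).exists_isMinOn
    (Set.nonempty_Icc.mpr (by norm_num)) hcont.continuousOn
  refine ⟨m, hm2.1, ?_⟩
  rw [isMinOn_iff] at hmin ⊢
  intro z hz
  rcases le_or_gt z 2 with h | h
  · exact hmin z ⟨hz, h⟩
  · have h0 : φ m ≤ φ 0 := hmin 0 ⟨le_rfl, by norm_num⟩
    have hφ0 : φ 0 = 0 := by simp [hφ]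
    have hst : 0 < Real.sqrt t := Real.sqrt_pos.mpr ht
    have hsz : Real.sqrt z ≤ z := by
      nlinarith [Real.sq_sqrt (by linarith : (0:ℝ) ≤ z), Real.sqrt_nonneg z,
        sq_nonneg (Real.sqrt z - 1)]
    have hzz : z ≤ z ^ 2 / 2 := by nlinarith
    have : 0 ≤ φ z := by
      have : 0 ≤ z / Real.sqrt t := by positivity
      simp only [hφ]; linarith
    linarith

lemma phi_min_pos (t : ℝ) (ht : 0 < t) (m : ℝ) (hm : 0 ≤ m)
    (hmin : IsMinOn (fun z : ℝ => z ^ 2 / 2 - Real.sqrt z + z / Real.sqrt t) (Set.Ici 0) m) :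
    0 < m := by
  rw [isMinOn_iff] at hmin
  set ε : ℝ := min t 1 / 4 with hε
  have hε0 : 0 < ε := by have := lt_min ht one_pos; positivity
  have hεt : ε ≤ t / 4 := by have := min_le_left t 1; linarith
  have hε1 : ε ≤ 1 / 4 := by have := min_le_right t 1; linarith
  have hse : Real.sqrt ε ^ 2 = ε := Real.sq_sqrt hε0.le
  have hse0 : 0 < Real.sqrt ε := Real.sqrt_pos.mpr hε0
  have hst : Real.sqrt t ^ 2 = t := Real.sq_sqrt ht.le
  have hst0 : 0 < Real.sqrt t := Real.sqrt_pos.mpr ht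
  have hhalf : Real.sqrt ε ≤ 1 / 2 := by
    nlinarith [hse0.le]
  have hhalf2 : 2 * Real.sqrt ε ≤ Real.sqrt t := by
    nlinarith [hse0.le, hst0.le]
  have hd1 : ε / Real.sqrt t ≤ Real.sqrt ε / 2 := by
    rw [div_le_div_iff₀ hst0 two_pos]
    nlinarith
  have hd2 : ε ^ 2 / 2 ≤ Real.sqrt ε / 16 := by nlinarith [hse0.le]
  have hneg : ε ^ 2 / 2 - Real.sqrt ε + ε / Real.sqrt t < 0 := by linarith
  by_contra h
  have hm0 : m = 0 := le_antisymm (not_lt.mp h) hm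
  have := hmin ε hε0.le
  rw [hm0] at this
  simp only [Real.sqrt_zero] at this
  norm_num at this
  linarith

lemma phi_min_le_half (t : ℝ) (ht : 0 < t) (m : ℝ) (hm : 0 ≤ m)
    (hmin : IsMinOn (fun z : ℝ => z ^ 2 / 2 - Real.sqrt z + z / Real.sqrt t) (Set.Ici 0) m) :
    m ≤ t / 2 := by
  rw [isMinOn_iff] at hmin
  by_contra h
  push_neg at h
  set a : ℝ := t / 2 with ha
  have ha0 : 0 < a := by positivity
  have key : m ^ 2 / 2 - Real.sqrt m + m / Real.sqrt t ≤
      a ^ 2 / 2 - Real.sqrt a + a / Real.sqrt t := hmin a ha0.le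
  have hsa : Real.sqrt a ^ 2 = a := Real.sq_sqrt ha0.le
  have hsm : Real.sqrt m ^ 2 = m := Real.sq_sqrt hm
  have hst : Real.sqrt t ^ 2 = t := Real.sq_sqrt ht.le
  have hsa0 : 0 < Real.sqrt a := Real.sqrt_pos.mpr ha0
  have hsm0 : 0 < Real.sqrt m := Real.sqrt_pos.mpr (by linarith)
  have hst0 : 0 < Real.sqrt t := Real.sqrt_pos.mpr ht
  have hma : Real.sqrt a < Real.sqrt m := by
    nlinarith
  have hsum : Real.sqrt t < Real.sqrt m + Real.sqrt a := by
    nlinarith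
  -- chord slope contradiction
  have h1 : (m - a) / Real.sqrt t ≤ Real.sqrt m - Real.sqrt a := by
    have hsq : a ^ 2 ≤ m ^ 2 := by nlinarith
    have heq : m / Real.sqrt t - a / Real.sqrt t = (m - a) / Real.sqrt t := by ring
    linarith
  rw [div_le_iff₀ hst0] at h1
  have h2 : (Real.sqrt m - Real.sqrt a) * Real.sqrt t < m - a := by nlinarith
  linarith

/-- the DCA iteration for `min {x²/2 + √x : x ≥ 0}` with the DC
decomposition `g(x) = x²/2 − √x`, `h(x) = −2√x` is well defined (each subproblem
has a unique, strictly positive minimizer `G(t)`), decreasing, and converges to the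
minimizer `0` of `x²/2 + √x` on `[0, ∞)`. -/
theorem stmt_18 :
    (∀ t : ℝ, 0 < t → ∃ m : ℝ, 0 < m ∧
        IsMinOn (fun z : ℝ => z ^ 2 / 2 - Real.sqrt z + z / Real.sqrt t) (Set.Ici 0) m ∧
        ∀ m' ∈ Set.Ici (0 : ℝ),
          IsMinOn (fun z : ℝ => z ^ 2 / 2 - Real.sqrt z + z / Real.sqrt t) (Set.Ici 0) m' →
            m' = m) ∧
    (∀ G : ℝ → ℝ,
      (∀ t, 0 < t → 0 < G t ∧
        IsMinOn (fun z : ℝ => z ^ 2 / 2 - Real.sqrt z + z / Real.sqrt t) (Set.Ici 0) (G t)) →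
      ∀ x : ℕ → ℝ, 0 < x 0 → (∀ k, x (k + 1) = G (x k)) →
        (∀ k, 0 < x k) ∧ (∀ k, x (k + 1) ≤ x k) ∧ Tendsto x atTop (𝓝 0)) ∧
    IsMinOn (fun z : ℝ => z ^ 2 / 2 + Real.sqrt z) (Set.Ici 0) 0 := by
  refine ⟨?_, ?_, ?_⟩
  · intro t ht
    obtain ⟨m, hm0, hmin⟩ := phi_exists_min t ht
    have hpos := phi_min_pos t ht m hm0 hmin
    refine ⟨m, hpos, hmin, ?_⟩
    intro m' hm' hmin'
    exact (phi_strictConvex t).eq_of_isMinOn hmin' hmin hm' hm0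
  · intro G hG x hx0 hrec
    have hpos : ∀ k, 0 < x k := by
      intro k
      induction k with
      | zero => exact hx0
      | succ n ih => rw [hrec n]; exact (hG (x n) ih).1
    have hhalf : ∀ k, x (k + 1) ≤ x k / 2 := by
      intro k
      rw [hrec k]
      exact phi_min_le_half (x k) (hpos k) (G (x k)) (hG (x k) (hpos k)).1.le
        (hG (x k) (hpos k)).2
    refine ⟨hpos, fun k => le_trans (hhalf k) (by linarith [hpos k]), ?_⟩
    have hbound : ∀ k, x k ≤ x 0 * (1 / 2) ^ k := by
      intro k
      induction k with
      | zero => simp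
      | succ n ih =>
        calc x (n + 1) ≤ x n / 2 := hhalf n
        _ ≤ x 0 * (1 / 2) ^ n / 2 := by linarith
        _ = x 0 * (1 / 2) ^ (n + 1) := by ring
    have hg : Tendsto (fun k => x 0 * (1 / 2) ^ k) atTop (𝓝 0) := by
      have := tendsto_pow_atTop_nhds_zero_of_lt_one (by norm_num : (0:ℝ) ≤ 1/2)
        (by norm_num : (1:ℝ)/2 < 1)
      simpa using this.const_mul (x 0)
    exact squeeze_zero (fun k => (hpos k).le) hbound hg
  · rw [isMinOn_iff]
    intro z hz
    have : (0:ℝ) ^ 2 / 2 + Real.sqrt 0 = 0 := by simp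
    rw [this]
    have := Real.sqrt_nonneg z
    have hz' : (0:ℝ) ≤ z := hz
    positivity
end
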